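/- arXiv:2509.15025 — 5 statements merged into one kernel-verified Lean document; each statement's English description precedes it below -/
import Mathlib

section
/- For the Blahut–Arimoto-type iteration, for all k ≥ 0 and any pair (P_{Z|XT}, Q_{Z|X}) with Q_{Z|X} = Q(P_{Z|XT}): D(Q_{Z|X} ∥ Q^{(k)} | P_X) − D(Q_{Z|X} ∥ Q^{(k+1)} | P_X) = F_μ(P^{(k+1)}, Q^{(k)}) − F_μ(P_{Z|XT}, Q_{Z|X}) + E[D(P_{T|XZ}(·|X,Z) ∥ P^{(k+1)}_{T|XZ}(·|X,Z))], where P_{T|XZ} denotes the backward conditional P_{T|XZ} = P_{Z|XT} P_{T|X} / Q_{Z|X}. -/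
open Finset

/-- Marginal channel `P_{T|X}(t|x) = ∑_s P_S(s) P_{T|XS}(t|x,s)`. -/
noncomputable def pTX {X S T : Type} [Fintype S]
    (pS : S → ℝ) (pTXS : X → S → T → ℝ) (x : X) (t : T) : ℝ :=
  ∑ s, pS s * pTXS x s t

/-- Joint law of (X,T). -/
noncomputable def pXT {X S T : Type} [Fintype S]
    (pX : X → ℝ) (pS : S → ℝ) (pTXS : X → S → T → ℝ) (x : X) (t : T) : ℝ :=
  pX x * pTX pS pTXS x t

/-- `F_μ(P_{Z|XT}, Q_{Z|X}) = D(P_{Z|XT} ∥ Q_{Z|X} | P_{XT}) − μ E[d(S,Z)]`. -/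
noncomputable def Fmu {X S T Z : Type} [Fintype X] [Fintype S] [Fintype T] [Fintype Z]
    (μ : ℝ) (pX : X → ℝ) (pS : S → ℝ) (pTXS : X → S → T → ℝ) (d : S → Z → ℝ)
    (P : X → T → Z → ℝ) (Q : X → Z → ℝ) : ℝ :=
  (∑ x, ∑ t, pXT pX pS pTXS x t * ∑ z, P x t z * Real.log (P x t z / Q x z))
    - μ * ∑ x, ∑ s, ∑ t, ∑ z, pX x * pS s * pTXS x s t * P x t z * d s z

/-- Posterior expectation `E[d(S,z)|x,t]`. -/
noncomputable def condExpD {X S T Z : Type} [Fintype S]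
    (pS : S → ℝ) (pTXS : X → S → T → ℝ) (d : S → Z → ℝ) (x : X) (t : T) (z : Z) : ℝ :=
  ∑ s, (pS s * pTXS x s t / ∑ s', pS s' * pTXS x s' t) * d s z

/-- The Gibbs-type update `P(Q)`. -/
noncomputable def updP {X S T Z : Type} [Fintype S] [Fintype Z]
    (μ : ℝ) (pS : S → ℝ) (pTXS : X → S → T → ℝ) (d : S → Z → ℝ)
    (Q : X → Z → ℝ) (x : X) (t : T) (z : Z) : ℝ :=
  Q x z * Real.exp (μ * condExpD pS pTXS d x t z) /
    ∑ a, Q x a * Real.exp (μ * condExpD pS pTXS d x t a)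

/-- The marginal update `Q(P)`. -/
noncomputable def updQ {X S T Z : Type} [Fintype S] [Fintype T]
    (pS : S → ℝ) (pTXS : X → S → T → ℝ) (P : X → T → Z → ℝ) (x : X) (z : Z) : ℝ :=
  ∑ t, ∑ s, pS s * pTXS x s t * P x t z

/-- Backward conditional `P_{T|XZ}(t|x,z) = P_{Z|XT}(z|x,t) P_{T|X}(t|x) / Q_{Z|X}(z|x)`. -/
noncomputable def bwd {X S T Z : Type} [Fintype S]
    (pS : S → ℝ) (pTXS : X → S → T → ℝ)
    (P : X → T → Z → ℝ) (Q : X → Z → ℝ) (x : X) (z : Z) (t : T) : ℝ :=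
  P x t z * pTX pS pTXS x t / Q x z

/-- Conditional KL divergence `D(Q ∥ Q' | P_X)` for conditionals on Z given X. -/
noncomputable def condKLQ {X Z : Type} [Fintype X] [Fintype Z]
    (pX : X → ℝ) (Q Q' : X → Z → ℝ) : ℝ :=
  ∑ x, pX x * ∑ z, Q x z * Real.log (Q x z / Q' x z)

/-!
Every term of the identity is an expectation `E_P[·]` under the joint law `P_X P_{T|X} P_{Z|XT}`
driven by `P`: the divergences from `Q = Q(P)` because `Q` is the `Z`-marginal of that law, and
`F_μ(P^{(k+1)}, Q^{(k)})` because `log (P^{(k+1)} / Q^{(k)}) - μ E[d(S,z)|x,t]` is minus the log of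
the normaliser of the Gibbs update, which does not depend on `z`, so its expectation is the same
under `P^{(k+1)}` and under `P`. Once everything is an expectation under `P`, both sides reduce
pointwise to `log Q^{(k+1)} - log Q^{(k)}`.
-/

open Real

section BlahutArimoto

variable {X S T Z : Type} [Fintype S]

lemma updQ_eq_sum_pTX_mul [Fintype T] (pS : S → ℝ) (pTXS : X → S → T → ℝ)
    (P : X → T → Z → ℝ) (x : X) (z : Z) :
    updQ pS pTXS P x z = ∑ t, pTX pS pTXS x t * P x t z := by
  simp only [updQ, pTX, sum_mul]

lemma pTX_mul_condExpD {pS : S → ℝ} {pTXS : X → S → T → ℝ} (d : S → Z → ℝ) {x : X} {t : T}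
    (hw : pTX pS pTXS x t ≠ 0) (z : Z) :
    pTX pS pTXS x t * condExpD pS pTXS d x t z = ∑ s, pS s * pTXS x s t * d s z := by
  unfold condExpD pTX at *
  rw [mul_sum]
  refine sum_congr rfl fun s _ => ?_
  field_simp

variable [Fintype X] [Fintype T] [Fintype Z] (pX : X → ℝ) (pS : S → ℝ) (pTXS : X → S → T → ℝ)

noncomputable def jointExpect (P : X → T → Z → ℝ) (f : X → T → Z → ℝ) : ℝ :=
  ∑ x, ∑ t, ∑ z, pXT pX pS pTXS x t * P x t z * f x t z

variable {pX pS pTXS}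

lemma jointExpect_sub (P : X → T → Z → ℝ) (f g : X → T → Z → ℝ) :
    jointExpect pX pS pTXS P f - jointExpect pX pS pTXS P g
      = jointExpect pX pS pTXS P (f - g) := by
  simp only [jointExpect, ← sum_sub_distrib, Pi.sub_apply, mul_sub]

lemma jointExpect_add (P : X → T → Z → ℝ) (f g : X → T → Z → ℝ) :
    jointExpect pX pS pTXS P f + jointExpect pX pS pTXS P g
      = jointExpect pX pS pTXS P (f + g) := by
  simp only [jointExpect, ← sum_add_distrib, Pi.add_apply, mul_add]

lemma jointExpect_eq_sum_pXT {P : X → T → Z → ℝ} (hP : ∀ x t, ∑ z, P x t z = 1)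
    (h : X → T → ℝ) :
    jointExpect pX pS pTXS P (fun x t _ => h x t) = ∑ x, ∑ t, pXT pX pS pTXS x t * h x t := by
  refine sum_congr rfl fun x _ => sum_congr rfl fun t _ => ?_
  rw [← sum_mul, ← mul_sum, hP, mul_one]

lemma condKLQ_updQ (P : X → T → Z → ℝ) (Q' : X → Z → ℝ) :
    condKLQ pX (updQ pS pTXS P) Q'
      = jointExpect pX pS pTXS P (fun x _ z => log (updQ pS pTXS P x z / Q' x z)) := by
  unfold condKLQ jointExpect
  refine sum_congr rfl fun x _ => ?_
  rw [sum_comm, mul_sum]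
  refine sum_congr rfl fun z _ => ?_
  simp_rw [pXT, mul_assoc (pX x), ← mul_sum, ← sum_mul, ← updQ_eq_sum_pTX_mul]

lemma Fmu_eq_jointExpect (μ : ℝ) (d : S → Z → ℝ) (hw : ∀ x t, pTX pS pTXS x t ≠ 0)
    (P : X → T → Z → ℝ) (Q : X → Z → ℝ) :
    Fmu μ pX pS pTXS d P Q = jointExpect pX pS pTXS P
      (fun x t z => log (P x t z / Q x z) - μ * condExpD pS pTXS d x t z) := by
  have hdist : ∑ x, ∑ s, ∑ t, ∑ z, pX x * pS s * pTXS x s t * P x t z * d s z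
      = jointExpect pX pS pTXS P (fun x t z => condExpD pS pTXS d x t z) := by
    refine sum_congr rfl fun x _ => ?_
    rw [sum_comm]
    refine sum_congr rfl fun t _ => ?_
    rw [sum_comm]
    refine sum_congr rfl fun z _ => ?_
    rw [pXT, mul_right_comm _ (P x t z), mul_assoc _ _ (condExpD _ _ _ _ _ _),
      pTX_mul_condExpD d (hw x t), mul_sum, sum_mul]
    exact sum_congr rfl fun s _ => by ring
  rw [Fmu, hdist]
  simp only [jointExpect, mul_sum, ← sum_sub_distrib]
  exact sum_congr rfl fun x _ => sum_congr rfl fun t _ => sum_congr rfl fun z _ => by ring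

end BlahutArimoto

section Gibbs

variable {X S T Z : Type} {pS : S → ℝ} {pTXS : X → S → T → ℝ}

lemma updQ_pos [Fintype S] [Fintype T] [Nonempty T] (hw : ∀ x t, 0 < pTX pS pTXS x t)
    {P : X → T → Z → ℝ} (hP : ∀ x t z, 0 < P x t z) (x : X) (z : Z) :
    0 < updQ pS pTXS P x z := by
  rw [updQ_eq_sum_pTX_mul]
  exact sum_pos (fun t _ => mul_pos (hw x t) (hP x t z)) univ_nonempty

variable [Fintype S] [Fintype Z] [Nonempty Z] (μ : ℝ) (d : S → Z → ℝ) {Q : X → Z → ℝ}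
  (hQ : ∀ x z, 0 < Q x z)
include hQ

lemma gibbs_normaliser_pos (x : X) (t : T) :
    0 < ∑ a, Q x a * exp (μ * condExpD pS pTXS d x t a) :=
  sum_pos (fun a _ => mul_pos (hQ x a) (exp_pos _)) univ_nonempty

lemma updP_pos (x : X) (t : T) (z : Z) : 0 < updP μ pS pTXS d Q x t z :=
  div_pos (mul_pos (hQ x z) (exp_pos _)) (gibbs_normaliser_pos μ d hQ x t)

lemma sum_updP (x : X) (t : T) : ∑ z, updP μ pS pTXS d Q x t z = 1 := by
  simp only [updP, ← sum_div]
  exact div_self (gibbs_normaliser_pos μ d hQ x t).ne'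

lemma log_updP_div_sub (x : X) (t : T) (z : Z) :
    log (updP μ pS pTXS d Q x t z / Q x z) - μ * condExpD pS pTXS d x t z
      = -log (∑ a, Q x a * exp (μ * condExpD pS pTXS d x t a)) := by
  have hN := (gibbs_normaliser_pos (pS := pS) (pTXS := pTXS) μ d hQ x t).ne'
  have hratio : updP μ pS pTXS d Q x t z / Q x z
      = exp (μ * condExpD pS pTXS d x t z) / ∑ a, Q x a * exp (μ * condExpD pS pTXS d x t a) := by
    have := (hQ x z).ne'
    unfold updP
    field_simp
  rw [hratio, log_div (exp_ne_zero _) hN, log_exp]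
  ring

end Gibbs

section Identity

variable {X S T Z : Type} [Fintype X] [Fintype S] [Fintype T] [Fintype Z]
  {pX : X → ℝ} {pS : S → ℝ} {pTXS : X → S → T → ℝ}

lemma Fmu_updP [Nonempty Z] (μ : ℝ) (d : S → Z → ℝ) (hw : ∀ x t, pTX pS pTXS x t ≠ 0)
    {Q : X → Z → ℝ} (hQ : ∀ x z, 0 < Q x z) {P : X → T → Z → ℝ}
    (hP : ∀ x t, ∑ z, P x t z = 1) :
    Fmu μ pX pS pTXS d (updP μ pS pTXS d Q) Q = jointExpect pX pS pTXS P
      (fun x t z => log (updP μ pS pTXS d Q x t z / Q x z) - μ * condExpD pS pTXS d x t z) := by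
  simp only [Fmu_eq_jointExpect μ d hw, log_updP_div_sub μ d hQ]
  rw [jointExpect_eq_sum_pXT (sum_updP μ d hQ), jointExpect_eq_sum_pXT hP]

lemma sum_mul_sum_bwd_mul_log (hw : ∀ x t, pTX pS pTXS x t ≠ 0) {P P' : X → T → Z → ℝ}
    {Q Q' : X → Z → ℝ} (hP : ∀ x t z, P x t z ≠ 0) (hQ : ∀ x z, Q x z ≠ 0)
    (hP' : ∀ x t z, P' x t z ≠ 0) (hQ' : ∀ x z, Q' x z ≠ 0) :
    ∑ x, ∑ z, pX x * Q x z *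
        ∑ t, bwd pS pTXS P Q x z t * log (bwd pS pTXS P Q x z t / bwd pS pTXS P' Q' x z t)
      = jointExpect pX pS pTXS P
          (fun x t z => log (P x t z / Q x z) - log (P' x t z / Q' x z)) := by
  unfold jointExpect
  refine sum_congr rfl fun x _ => ?_
  rw [sum_comm]
  refine sum_congr rfl fun z _ => ?_
  rw [mul_sum]
  refine sum_congr rfl fun t _ => ?_
  have hratio : bwd pS pTXS P Q x z t / bwd pS pTXS P' Q' x z t
      = (P x t z / Q x z) / (P' x t z / Q' x z) := by
    have := hw x t; have := hQ x z; have := hP' x t z; have := hQ' x z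
    unfold bwd
    field_simp
  rw [hratio, log_div (div_ne_zero (hP x t z) (hQ x z)) (div_ne_zero (hP' x t z) (hQ' x z)),
    bwd, pXT]
  field_simp [hQ x z]

end Identity

lemma ba_iterate_pos {X S T Z : Type} [Fintype S] [Fintype T] [Fintype Z] [Nonempty T]
    [Nonempty Z] {μ : ℝ} {pS : S → ℝ} {pTXS : X → S → T → ℝ} {d : S → Z → ℝ}
    (hw : ∀ x t, 0 < pTX pS pTXS x t) {Qseq : ℕ → X → Z → ℝ} {Pseq : ℕ → X → T → Z → ℝ}
    (hQ0 : ∀ x z, 0 < Qseq 0 x z) (hPrec : ∀ k, Pseq (k + 1) = updP μ pS pTXS d (Qseq k))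
    (hQrec : ∀ k, Qseq (k + 1) = updQ pS pTXS (Pseq (k + 1))) (k : ℕ) (x : X) (z : Z) :
    0 < Qseq k x z := by
  induction k generalizing x z with
  | zero => exact hQ0 x z
  | succ k ih => rw [hQrec, hPrec]; exact updQ_pos hw (updP_pos μ d ih) x z

theorem stmt5_general {X S T Z : Type} [Fintype X] [Fintype S] [Fintype T] [Fintype Z]
    (μ : ℝ)
    (pX : X → ℝ) (pS : S → ℝ) (pTXS : X → S → T → ℝ) (d : S → Z → ℝ)
    (hpTXpos : ∀ x t, 0 < pTX pS pTXS x t)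
    (Qseq : ℕ → X → Z → ℝ) (Pseq : ℕ → X → T → Z → ℝ)
    (hQ0pos : ∀ x z, 0 < Qseq 0 x z)
    (hPrec : ∀ k, Pseq (k + 1) = updP μ pS pTXS d (Qseq k))
    (hQrec : ∀ k, Qseq (k + 1) = updQ pS pTXS (Pseq (k + 1))) :
    ∀ k, ∀ P : X → T → Z → ℝ, ∀ Q : X → Z → ℝ,
      (∀ x t z, 0 < P x t z) → (∀ x t, ∑ z, P x t z = 1) →
      Q = updQ pS pTXS P →
      condKLQ pX Q (Qseq k) - condKLQ pX Q (Qseq (k + 1)) =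
        Fmu μ pX pS pTXS d (Pseq (k + 1)) (Qseq k) - Fmu μ pX pS pTXS d P Q
          + ∑ x, ∑ z, pX x * Q x z *
              ∑ t, bwd pS pTXS P Q x z t *
                Real.log (bwd pS pTXS P Q x z t /
                  bwd pS pTXS (Pseq (k + 1)) (Qseq (k + 1)) x z t) := by
  rintro k P _ hP hPsum rfl
  -- with `T` or `Z` empty, `Q(P) = 0` and every term is an empty sum or vanishes
  rcases isEmpty_or_nonempty T with hT | hT
  · simp [condKLQ, Fmu, updQ]
  rcases isEmpty_or_nonempty Z with hZ | hZ
  · simp [condKLQ, Fmu]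
  have hw x t := (hpTXpos x t).ne'
  have hQseq := ba_iterate_pos hpTXpos hQ0pos hPrec hQrec
  have hQ := updQ_pos hpTXpos hP
  have hP' := hPrec k ▸ updP_pos μ d (hQseq k)
  rw [condKLQ_updQ, condKLQ_updQ, jointExpect_sub, hPrec k, Fmu_updP μ d hw (hQseq k) hPsum,
    Fmu_eq_jointExpect μ d hw, jointExpect_sub, ← hPrec k,
    sum_mul_sum_bwd_mul_log hw (fun x t z => (hP x t z).ne') (fun x z => (hQ x z).ne')
      (fun x t z => (hP' x t z).ne') (fun x z => (hQseq (k + 1) x z).ne'), jointExpect_add]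
  congr 1
  funext x t z
  simp only [Pi.add_apply, Pi.sub_apply]
  rw [log_div (hQ x z).ne' (hQseq k x z).ne', log_div (hQ x z).ne' (hQseq (k + 1) x z).ne',
    log_div (hP' x t z).ne' (hQseq k x z).ne', log_div (hP' x t z).ne' (hQseq (k + 1) x z).ne']
  ring

/-- the key identity of the BA convergence proof: for all `k ≥ 0` and any
pair `(P, Q)` with `Q = Q(P)`,
`D(Q ∥ Q^{(k)} | P_X) − D(Q ∥ Q^{(k+1)} | P_X)
 = F_μ(P^{(k+1)}, Q^{(k)}) − F_μ(P, Q) + E[D(P_{T|XZ}(·|X,Z) ∥ P^{(k+1)}_{T|XZ}(·|X,Z))]`,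
where the backward conditionals are `P_{T|XZ} = P_{Z|XT} P_{T|X} / Q_{Z|X}` and the outer
expectation is over `(X,Z) ~ P_X Q_{Z|X}`. -/
theorem stmt5 {X S T Z : Type} [Fintype X] [Fintype S] [Fintype T] [Fintype Z]
    (μ : ℝ) (hμ : μ ≤ 0)
    (pX : X → ℝ) (pS : S → ℝ) (pTXS : X → S → T → ℝ) (d : S → Z → ℝ)
    (hpX : ∀ x, 0 ≤ pX x) (hpXsum : ∑ x, pX x = 1)
    (hpS : ∀ s, 0 ≤ pS s) (hpSsum : ∑ s, pS s = 1)
    (hpTXS : ∀ x s t, 0 ≤ pTXS x s t) (hpTXSsum : ∀ x s, ∑ t, pTXS x s t = 1)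
    (hpTXpos : ∀ x t, 0 < pTX pS pTXS x t)
    (hd : ∀ s z, 0 ≤ d s z)
    (Qseq : ℕ → X → Z → ℝ) (Pseq : ℕ → X → T → Z → ℝ)
    (hQ0pos : ∀ x z, 0 < Qseq 0 x z) (hQ0sum : ∀ x, ∑ z, Qseq 0 x z = 1)
    (hPrec : ∀ k, Pseq (k + 1) = updP μ pS pTXS d (Qseq k))
    (hQrec : ∀ k, Qseq (k + 1) = updQ pS pTXS (Pseq (k + 1))) :
    ∀ k, ∀ P : X → T → Z → ℝ, ∀ Q : X → Z → ℝ,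
      (∀ x t z, 0 < P x t z) → (∀ x t, ∑ z, P x t z = 1) →
      Q = updQ pS pTXS P →
      condKLQ pX Q (Qseq k) - condKLQ pX Q (Qseq (k + 1)) =
        Fmu μ pX pS pTXS d (Pseq (k + 1)) (Qseq k) - Fmu μ pX pS pTXS d P Q
          + ∑ x, ∑ z, pX x * Q x z *
              ∑ t, bwd pS pTXS P Q x z t *
                Real.log (bwd pS pTXS P Q x z t /
                  bwd pS pTXS (Pseq (k + 1)) (Qseq (k + 1)) x z t) :=
  stmt5_general μ pX pS pTXS d hpTXpos Qseq Pseq hQ0pos hPrec hQrec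
end

section
/- Converse change-of-measure bound: let W ∈ {1,…,K} and suppose the Markov chain T — (X,W) — Z holds via encoder P_{W|XT} and decoder P_{Z|W}, with j(t|z,x) = log(P_{T|ZX}(t|z,x)/P_{T|X}(t|x)). Then for any γ > 0, P[ j(T|Z,X) > log K + γ ] ≤ exp(−γ). -/
/-!
On the event `j > log K + γ` we have `P_{T|X} ≤ e^{-γ} P_{T|ZX} / K`, and `P_{W|XT} ≤ 1`, so the
probability of the event is at most `e^{-γ} / K · ∑ x, P_X(x) ∑ z, ∑ w, P_{Z|W}(z|w) ∑ t, P_{T|ZX}(t|z,x)`.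
The inner sum over `t` is at most `1` and the sum over `z` and `w` equals `K`.
-/

open Finset Real

/-- Markov's inequality for a single atom; `0 ≤ c` rules out the junk value `log 0 = 0`. -/
lemma ite_lt_log_div_le {a b c : ℝ} (ha : 0 ≤ a) (hb : 0 ≤ b) (hc : 0 ≤ c) :
    (if c < log (a / b) then b else 0) ≤ exp (-c) * a := by
  split_ifs with h
  · have hab : 0 < a / b := by
      refine (div_nonneg ha hb).lt_of_ne fun h0 => ?_
      rw [← h0, log_zero] at h
      linarith
    have hb' : 0 < b := by
      refine hb.lt_of_ne fun h0 => ?_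
      rw [← h0, div_zero] at hab
      exact hab.false
    have : exp c * b < a := by
      rw [← lt_div_iff₀ hb', ← exp_log hab]
      exact exp_lt_exp.mpr h
    rw [exp_neg, ← div_eq_inv_mul, le_div_iff₀ (exp_pos c)]
    linarith
  · positivity

lemma sum_div_sum_le_one {ι : Type*} (s : Finset ι) (f : ι → ℝ) :
    ∑ i ∈ s, f i / ∑ j ∈ s, f j ≤ 1 := by
  rw [← sum_div]
  exact div_self_le_one _

lemma sum_mul_le_sum_of_sum_eq_one {ι : Type*} [Fintype ι] {p f : ι → ℝ}
    (hp : ∀ i, 0 ≤ p i) (hp1 : ∑ i, p i = 1) (hf : ∀ i, 0 ≤ f i) :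
    ∑ i, p i * f i ≤ ∑ i, f i :=
  sum_le_sum fun i _ => mul_le_of_le_one_left (hf i) <|
    hp1 ▸ single_le_sum (fun j _ => hp j) (mem_univ i)

-- `P_{W|XT} ≤ 1` lets the decoder mass `∑ w, d w` absorb the encoder.
lemma ite_lt_log_div_sum_le {ι : Type*} [Fintype ι] {px pt q c : ℝ} {e d : ι → ℝ}
    (hpx : 0 ≤ px) (hpt : 0 ≤ pt) (hq : 0 ≤ q) (he : ∀ i, 0 ≤ e i) (he1 : ∑ i, e i = 1)
    (hd : ∀ i, 0 ≤ d i) (hc : 0 ≤ c) :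
    (∑ i, if c < log (q / pt) then px * pt * e i * d i else 0)
      ≤ exp (-c) * px * (∑ i, d i) * q :=
  calc (∑ i, if c < log (q / pt) then px * pt * e i * d i else 0)
      = px * (∑ i, e i * d i) * (if c < log (q / pt) then pt else 0) := by
        split_ifs
        · simp only [mul_sum, sum_mul]
          exact sum_congr rfl fun i _ => by ring
        · simp
    _ ≤ px * (∑ i, d i) * (exp (-c) * q) := by
        have hevent : 0 ≤ if c < log (q / pt) then pt else 0 := by
          split_ifs
          exacts [hpt, le_rfl]
        refine mul_le_mul (mul_le_mul_of_nonneg_left ?_ hpx) (ite_lt_log_div_le hq hpt hc)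
          hevent (mul_nonneg hpx (sum_nonneg fun i _ => hd i))
        exact sum_mul_le_sum_of_sum_eq_one he he1 hd
    _ = exp (-c) * px * (∑ i, d i) * q := by ring

lemma nat_mul_exp_neg_log_add {K : ℕ} (hK : 0 < K) (γ : ℝ) :
    K * exp (-(log K + γ)) = exp (-γ) := by
  have hK' : (0 : ℝ) < K := Nat.cast_pos.mpr hK
  rw [neg_add, exp_add, exp_neg (log K), exp_log hK']
  field_simp

theorem stmt8_general {X T Z : Type} [Fintype X] [Fintype T] [Fintype Z]
    (K : ℕ) (hK : 0 < K)
    (pX : X → ℝ) (pTX : X → T → ℝ)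
    (enc : X → T → Fin K → ℝ) (dec : Fin K → Z → ℝ)
    (hpX : ∀ x, 0 ≤ pX x) (hpXsum : ∑ x, pX x = 1)
    (hpTX : ∀ x t, 0 ≤ pTX x t)
    (henc : ∀ x t w, 0 ≤ enc x t w) (hencsum : ∀ x t, ∑ w, enc x t w = 1)
    (hdec : ∀ w z, 0 ≤ dec w z) (hdecsum : ∀ w, ∑ z, dec w z = 1)
    (γ : ℝ) (hγ : 0 < γ) :
    -- joint law of (X,T,W,Z)
    let joint : X → T → Fin K → Z → ℝ := fun x t w z => pX x * pTX x t * enc x t w * dec w z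
    -- marginal of (X,Z)
    let pXZ : X → Z → ℝ := fun x z => ∑ t, ∑ w, joint x t w z
    -- induced backward conditional P_{T|ZX}
    let pTZX : X → Z → T → ℝ := fun x z t => (∑ w, joint x t w z) / pXZ x z
    -- information density j(t|z,x)
    let j : X → Z → T → ℝ := fun x z t => Real.log (pTZX x z t / pTX x t)
    (∑ x, ∑ t, ∑ w, ∑ z,
        if j x z t > Real.log K + γ then joint x t w z else 0) ≤ Real.exp (-γ) := by
  intro joint pXZ pTZX j
  set c := log K + γ
  have hc : 0 ≤ c := by
    have := log_nonneg (Nat.one_le_cast.mpr hK : (1 : ℝ) ≤ K)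
    positivity
  have hpTZX : ∀ x z t, 0 ≤ pTZX x z t := fun x z t => by
    have : ∀ t w, 0 ≤ joint x t w z := fun t w => by
      have := hpX x; have := hpTX x t; have := henc x t w; have := hdec w z
      positivity
    exact div_nonneg (sum_nonneg fun w _ => this t w)
      (sum_nonneg fun t _ => sum_nonneg fun w _ => this t w)
  calc (∑ x, ∑ t, ∑ w, ∑ z, if c < j x z t then joint x t w z else 0)
      = ∑ x, ∑ t, ∑ z, ∑ w, if c < j x z t then joint x t w z else 0 :=
        sum_congr rfl fun x _ => sum_congr rfl fun t _ => sum_comm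
    _ ≤ ∑ x, ∑ t, ∑ z, exp (-c) * pX x * (∑ w, dec w z) * pTZX x z t := by
        gcongr with x _ t _ z _
        exact ite_lt_log_div_sum_le (hpX x) (hpTX x t) (hpTZX x z t) (henc x t) (hencsum x t)
          (hdec · z) hc
    _ = ∑ x, ∑ z, exp (-c) * pX x * (∑ w, dec w z) * ∑ t, pTZX x z t := by
        simp only [mul_sum]
        exact sum_congr rfl fun x _ => sum_comm
    _ ≤ ∑ x, ∑ z, exp (-c) * pX x * (∑ w, dec w z) := by
        refine sum_le_sum fun x _ => sum_le_sum fun z _ => ?_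
        refine mul_le_of_le_one_right ?_ (sum_div_sum_le_one _ _)
        have := hpX x
        have := sum_nonneg fun w (_ : w ∈ univ) => hdec w z
        positivity
    _ = K * exp (-c) := by
        have hdec_total : ∑ z, ∑ w, dec w z = K := by
          rw [sum_comm]
          simp [hdecsum]
        simp only [← mul_sum, hdec_total, ← sum_mul, hpXsum]
        ring
    _ = exp (-γ) := nat_mul_exp_neg_log_add hK γ

/-- converse change-of-measure bound. With `W ∈ [K]` generated from `(X,T)`
by an encoder `P_{W|XT}` and `Z` generated from `W` by a decoder `P_{Z|W}` (so the Markov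
chain `T — (X,W) — Z` holds), and
`j(t|z,x) = log(P_{T|ZX}(t|z,x)/P_{T|X}(t|x))`, for any `γ > 0` we have
`P[ j(T|Z,X) > log K + γ ] ≤ exp(−γ)`. -/
theorem stmt8 {X T Z : Type} [Fintype X] [Fintype T] [Fintype Z]
    (K : ℕ) (hK : 0 < K)
    (pX : X → ℝ) (pTX : X → T → ℝ)
    (enc : X → T → Fin K → ℝ) (dec : Fin K → Z → ℝ)
    (hpX : ∀ x, 0 ≤ pX x) (hpXsum : ∑ x, pX x = 1)
    (hpTX : ∀ x t, 0 ≤ pTX x t) (hpTXsum : ∀ x, ∑ t, pTX x t = 1)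
    (henc : ∀ x t w, 0 ≤ enc x t w) (hencsum : ∀ x t, ∑ w, enc x t w = 1)
    (hdec : ∀ w z, 0 ≤ dec w z) (hdecsum : ∀ w, ∑ z, dec w z = 1)
    (γ : ℝ) (hγ : 0 < γ) :
    -- joint law of (X,T,W,Z)
    let joint : X → T → Fin K → Z → ℝ := fun x t w z => pX x * pTX x t * enc x t w * dec w z
    -- marginal of (X,Z)
    let pXZ : X → Z → ℝ := fun x z => ∑ t, ∑ w, joint x t w z
    -- induced backward conditional P_{T|ZX}
    let pTZX : X → Z → T → ℝ := fun x z t => (∑ w, joint x t w z) / pXZ x z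
    -- information density j(t|z,x)
    let j : X → Z → T → ℝ := fun x z t => Real.log (pTZX x z t / pTX x t)
    (∑ x, ∑ t, ∑ w, ∑ z,
        if j x z t > Real.log K + γ then joint x t w z else 0) ≤ Real.exp (-γ) :=
  stmt8_general K hK pX pTX enc dec hpX hpXsum hpTX henc hencsum hdec hdecsum γ hγ
end

section
/- For the binary multiplicative channel with T = S·X, S ~ Bernoulli(q), X ~ Bernoulli with P(X=0)=p independent of S, and Hamming distortion d(s,z) = 1{s ≠ z}: the rate-distortion function of the estimator equals R(D) = (1−p)·( H_b(q) − H_b( (D − p·min{q,1−q}) / (1−p) ) ) for p·min{q,1−q} < D ≤ min{q,1−q}, where R(D) = inf over P_{Z|XT} with E[d(S,Z)] ≤ D of I(T;Z|X). -/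
open Finset

/-- Binary entropy function. -/
noncomputable def binEnt (p : ℝ) : ℝ := -p * Real.log p - (1 - p) * Real.log (1 - p)

/-!
Given `X = 0` the estimator sees `T = 0` and learns nothing about `S`: the best it can do is to
guess the likelier value, at distortion `min q (1 - q)` and no rate. Given `X = 1` it sees
`T = S`, so what is left of the budget, `D' = (D - p·min q (1 - q)) / (1 - p)`, is spent on the
Bernoulli(q) rate-distortion problem, whose value is `H_b q - H_b D'`.

For the latter, any backward channel `R` gives
`I(S;Z) = H(S) + E[log R(S | Z)] + D(P_{SZ} ‖ P_Z ⊗ R)`. With `R` the binary symmetric channel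
whose crossover is the error probability `ε = P(S ≠ Z)`, the middle term is `-H_b ε`, so Gibbs'
inequality gives `I(S;Z) ≥ H_b q - H_b ε ≥ H_b q - H_b D'`. Equality holds for the channel
obtained by reversing `Z ~ Bernoulli(r)`, `S = Z ⊕ N`, `N ~ Bernoulli(D')`, since then the joint
law is exactly `P_Z ⊗ R`.
-/

open Real

lemma sub_le_mul_log_div {x y : ℝ} (hx : 0 ≤ x) (hy : 0 ≤ y) (hxy : y = 0 → x = 0) :
    x - y ≤ x * log (x / y) := by
  rcases hy.eq_or_lt with rfl | hy
  · simp [hxy rfl]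
  have := mul_le_mul_of_nonneg_left (self_sub_one_le_mul_log (div_nonneg hx hy.le)) hy.le
  rwa [mul_sub, mul_div_cancel₀ _ hy.ne', mul_one, ← mul_assoc, mul_div_cancel₀ _ hy.ne'] at this

section MutualInformation

variable {α β : Type*} [Fintype α]

lemma mul_le_sum_mul {p : α → ℝ} {W : α → β → ℝ} (hp : ∀ a, 0 ≤ p a) (hW : ∀ a b, 0 ≤ W a b)
    (a : α) (b : β) : p a * W a b ≤ ∑ a', p a' * W a' b :=
  single_le_sum (f := fun a' => p a' * W a' b) (fun a' _ => mul_nonneg (hp a') (hW a' b))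
    (mem_univ a)

variable [Fintype β]

noncomputable def mutualInfo (p : α → ℝ) (W : α → β → ℝ) : ℝ :=
  ∑ a, ∑ b, p a * W a b * log (W a b / ∑ a', p a' * W a' b)

lemma mutualInfo_ite_eq_zero [DecidableEq α] (a₀ : α) (W : α → β → ℝ) :
    mutualInfo (fun a => if a = a₀ then 1 else 0) W = 0 := by
  simp [mutualInfo]

variable {p : α → ℝ} {W : α → β → ℝ} (R : β → α → ℝ)

/-- `I(A;B) = H(A) + E[log R(A | B)] + D(P_{AB} ‖ P_B ⊗ R)` for any backward channel `R`. -/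
lemma mutualInfo_eq_add_sum_mul_log_div (hp : ∀ a, 0 ≤ p a) (hW : ∀ a b, 0 ≤ W a b)
    (hW1 : ∀ a, ∑ b, W a b = 1) (hR : ∀ a b, p a * W a b ≠ 0 → R b a ≠ 0) :
    mutualInfo p W = ∑ a, negMulLog (p a) + ∑ a, ∑ b, p a * W a b * log (R b a)
      + ∑ a, ∑ b, p a * W a b * log (p a * W a b / ((∑ a', p a' * W a' b) * R b a)) := by
  have hterm : ∀ a b, p a * W a b * log (W a b / ∑ a', p a' * W a' b) =
      negMulLog (p a) * W a b + p a * W a b * log (R b a)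
        + p a * W a b * log (p a * W a b / ((∑ a', p a' * W a' b) * R b a)) := by
    intro a b
    rcases eq_or_ne (p a * W a b) 0 with h | h
    · rcases mul_eq_zero.1 h with h' | h' <;> simp [h']
    have hQ : 0 < ∑ a', p a' * W a' b :=
      (lt_of_le_of_ne (mul_nonneg (hp a) (hW a b)) h.symm).trans_le (mul_le_sum_mul hp hW a b)
    have hpa := left_ne_zero_of_mul h
    have hWab := right_ne_zero_of_mul h
    rw [log_div hWab hQ.ne', log_div h (mul_ne_zero hQ.ne' (hR a b h)), log_mul hpa hWab,
      log_mul hQ.ne' (hR a b h), negMulLog]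
    ring
  simp only [mutualInfo, hterm, sum_add_distrib, ← mul_sum, hW1, mul_one]

lemma sum_negMulLog_add_le_mutualInfo (hp : ∀ a, 0 ≤ p a) (hW : ∀ a b, 0 ≤ W a b)
    (hW1 : ∀ a, ∑ b, W a b = 1) (hR0 : ∀ b a, 0 ≤ R b a) (hR1 : ∀ b, ∑ a, R b a = 1)
    (hR : ∀ a b, p a * W a b ≠ 0 → R b a ≠ 0) :
    ∑ a, negMulLog (p a) + ∑ a, ∑ b, p a * W a b * log (R b a) ≤ mutualInfo p W := by
  rw [mutualInfo_eq_add_sum_mul_log_div R hp hW hW1 hR, le_add_iff_nonneg_right]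
  have hJ : ∀ a b, 0 ≤ p a * W a b := fun a b => mul_nonneg (hp a) (hW a b)
  calc (0 : ℝ) = ∑ a, ∑ b, (p a * W a b - (∑ a', p a' * W a' b) * R b a) := by
        rw [sum_comm]
        simp only [sum_sub_distrib, ← mul_sum, hR1, mul_one, sub_self, sum_const_zero]
    _ ≤ _ := by
        refine sum_le_sum fun a _ => sum_le_sum fun b _ => sub_le_mul_log_div (hJ a b)
          (mul_nonneg (sum_nonneg fun a' _ => hJ a' b) (hR0 b a)) fun h => ?_
        rcases mul_eq_zero.1 h with h | h
        · exact le_antisymm (h ▸ mul_le_sum_mul hp hW a b) (hJ a b)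
        · exact not_imp_comm.1 (hR a b) (not_not.2 h)

lemma mutualInfo_eq_of_mul_eq (hp : ∀ a, 0 ≤ p a) (hW : ∀ a b, 0 ≤ W a b)
    (hW1 : ∀ a, ∑ b, W a b = 1) (hJ : ∀ a b, p a * W a b = (∑ a', p a' * W a' b) * R b a) :
    mutualInfo p W = ∑ a, negMulLog (p a) + ∑ a, ∑ b, p a * W a b * log (R b a) := by
  rw [mutualInfo_eq_add_sum_mul_log_div R hp hW hW1
    fun a b h => right_ne_zero_of_mul (hJ a b ▸ h)]
  simp [← hJ]

end MutualInformation

def bern (q : ℝ) : Bool → ℝ := fun s => if s then q else 1 - q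

def bsc (ε : ℝ) : Bool → Bool → ℝ := fun a b => if a = b then 1 - ε else ε

def errorProb (q : ℝ) (W : Bool → Bool → ℝ) : ℝ :=
  ∑ s, ∑ z, bern q s * W s z * if s = z then 0 else 1

lemma bern_nonneg {q : ℝ} (hq0 : 0 ≤ q) (hq1 : q ≤ 1) (s : Bool) : 0 ≤ bern q s := by
  cases s
  exacts [sub_nonneg.2 hq1, hq0]

lemma bern_pos {q : ℝ} (hq0 : 0 < q) (hq1 : q < 1) (s : Bool) : 0 < bern q s := by
  cases s
  exacts [sub_pos.2 hq1, hq0]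

lemma bsc_nonneg {ε : ℝ} (hε0 : 0 ≤ ε) (hε1 : ε ≤ 1) (a b : Bool) : 0 ≤ bsc ε a b := by
  unfold bsc
  split_ifs <;> linarith

lemma sum_bsc (ε : ℝ) (a : Bool) : ∑ b, bsc ε a b = 1 := by
  cases a <;> simp [bsc]

lemma sum_bern_mul_bsc (r ε : ℝ) (a : Bool) :
    ∑ b, bern r b * bsc ε b a = bern (r + ε - 2 * r * ε) a := by
  cases a <;> simp only [Fintype.sum_bool, bern, bsc, ↓reduceIte, Bool.true_eq_false,
    Bool.false_eq_true] <;> ring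

lemma binEnt_eq_binEntropy : binEnt = binEntropy := by
  ext x
  simp only [binEnt, binEntropy, log_inv]
  ring

lemma binEnt_le_binEnt {x y : ℝ} (hx : 0 ≤ x) (hxy : x ≤ y) (hy : y ≤ 1 / 2) :
    binEnt x ≤ binEnt y := by
  rw [binEnt_eq_binEntropy]
  exact binEntropy_strictMonoOn.monotoneOn ⟨hx, by linarith⟩ ⟨hx.trans hxy, by linarith⟩ hxy

lemma sum_negMulLog_bern (q : ℝ) : ∑ s, negMulLog (bern q s) = binEnt q := by
  simp only [Fintype.sum_bool, bern, negMulLog, binEnt, ↓reduceIte, Bool.false_eq_true]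
  ring

lemma sum_mul_log_bsc_errorProb {q : ℝ} {W : Bool → Bool → ℝ} (hW1 : ∀ s, ∑ z, W s z = 1) :
    ∑ s, ∑ z, bern q s * W s z * log (bsc (errorProb q W) z s) = -binEnt (errorProb q W) := by
  have hoff : q * W true false + (1 - q) * W false true = errorProb q W := by
    simp [errorProb, bern]
  have hdiag : q * W true true + (1 - q) * W false false = 1 - errorProb q W := by
    have h0 := hW1 false
    have h1 := hW1 true
    simp only [Fintype.sum_bool] at h0 h1
    linear_combination q * h1 + (1 - q) * h0 - hoff
  generalize errorProb q W = ε at hoff hdiag ⊢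
  simp only [Fintype.sum_bool, bsc, bern, binEnt, ↓reduceIte, Bool.true_eq_false,
    Bool.false_eq_true]
  linear_combination log (1 - ε) * hdiag + log ε * hoff

lemma binEnt_sub_binEnt_le_mutualInfo {q D : ℝ} {W : Bool → Bool → ℝ} (hq0 : 0 ≤ q) (hq1 : q ≤ 1)
    (hW : ∀ s z, 0 ≤ W s z) (hW1 : ∀ s, ∑ z, W s z = 1) (hD : errorProb q W ≤ D)
    (hD2 : D ≤ 1 / 2) : binEnt q - binEnt D ≤ mutualInfo (bern q) W := by
  have hJ : ∀ s z, 0 ≤ bern q s * W s z := fun s z => mul_nonneg (bern_nonneg hq0 hq1 s) (hW s z)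
  have hε : 0 ≤ errorProb q W :=
    sum_nonneg fun s _ => sum_nonneg fun z _ => mul_nonneg (hJ s z) (by split_ifs <;> norm_num)
  have hR : ∀ s z, bern q s * W s z ≠ 0 → bsc (errorProb q W) z s ≠ 0 := by
    intro s z h
    unfold bsc
    split_ifs with hzs
    · exact (show 0 < 1 - errorProb q W by linarith).ne'
    · have hoff : bern q s * W s z ≤ errorProb q W := by
        cases s <;> cases z <;> simp only [errorProb, Fintype.sum_bool, bern, ↓reduceIte,
          Bool.true_eq_false, Bool.false_eq_true, not_true_eq_false] at hzs ⊢ <;>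
          nlinarith [hW true false, hW false true]
      exact ((lt_of_le_of_ne (hJ s z) h.symm).trans_le hoff).ne'
  calc binEnt q - binEnt D ≤ binEnt q - binEnt (errorProb q W) := by
        gcongr
        exact binEnt_le_binEnt hε hD hD2
    _ = ∑ s, negMulLog (bern q s)
          + ∑ s, ∑ z, bern q s * W s z * log (bsc (errorProb q W) z s) := by
        rw [sum_negMulLog_bern, sum_mul_log_bsc_errorProb hW1, sub_eq_add_neg]
    _ ≤ mutualInfo (bern q) W :=
        sum_negMulLog_add_le_mutualInfo _ (bern_nonneg hq0 hq1) hW hW1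
          (bsc_nonneg hε (by linarith)) (sum_bsc _) hR

lemma exists_mutualInfo_eq_binEnt_sub_binEnt {q D : ℝ} (hq0 : 0 < q) (hq1 : q < 1) (hD0 : 0 ≤ D)
    (hDq : D ≤ q) (hDq' : D ≤ 1 - q) :
    ∃ W : Bool → Bool → ℝ, (∀ s z, 0 ≤ W s z) ∧ (∀ s, ∑ z, W s z = 1) ∧
      errorProb q W = D ∧ mutualInfo (bern q) W = binEnt q - binEnt D := by
  -- `r` solves `r * (1 - D) + (1 - r) * D = q`; if `D = 1 / 2` then `q = 1 / 2` and the junk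
  -- value `r = 0` still does.
  set r := (q - D) / (1 - 2 * D)
  have hr : r + D - 2 * r * D = q := by
    rcases eq_or_ne (1 - 2 * D) 0 with h | h
    · simp only [r, h, div_zero]
      linarith
    · linear_combination div_mul_cancel₀ (q - D) h
  have hr0 : 0 ≤ r := div_nonneg (by linarith) (by linarith)
  have hr1 : r ≤ 1 := div_le_one_of_le₀ (by linarith) (by linarith)
  set W : Bool → Bool → ℝ := fun s z => bern r z * bsc D z s / bern q s
  have hJ : ∀ s z, bern q s * W s z = bern r z * bsc D z s :=
    fun s z => mul_div_cancel₀ _ (bern_pos hq0 hq1 s).ne'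
  have hout : ∀ z, ∑ s, bern q s * W s z = bern r z := by
    simp only [hJ, ← mul_sum, sum_bsc, mul_one, implies_true]
  have hW0 : ∀ s z, 0 ≤ W s z := fun s z =>
    div_nonneg (mul_nonneg (bern_nonneg hr0 hr1 z) (bsc_nonneg hD0 (by linarith) z s))
      (bern_pos hq0 hq1 s).le
  have hW1 : ∀ s, ∑ z, W s z = 1 := by
    intro s
    rw [← sum_div, sum_bern_mul_bsc, hr, div_self (bern_pos hq0 hq1 s).ne']
  have herr : errorProb q W = D := by
    simp only [errorProb, hJ]
    simp only [Fintype.sum_bool, bern, bsc, ↓reduceIte, Bool.true_eq_false, Bool.false_eq_true]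
    ring
  refine ⟨W, hW0, hW1, herr, ?_⟩
  rw [mutualInfo_eq_of_mul_eq (bsc D) (bern_nonneg hq0.le hq1.le) hW0 hW1
      (fun s z => by rw [hJ, hout]),
    sum_negMulLog_bern, ← herr, sum_mul_log_bsc_errorProb hW1, sub_eq_add_neg]

lemma min_le_errorProb_const {q : ℝ} {v : Bool → ℝ} (hv : ∀ z, 0 ≤ v z) (hv1 : ∑ z, v z = 1) :
    min q (1 - q) ≤ errorProb q (fun _ => v) := by
  have h : errorProb q (fun _ => v) = q * v false + (1 - q) * v true := by
    simp [errorProb, bern]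
  simp only [Fintype.sum_bool] at hv1
  rw [h]
  linarith [mul_le_mul_of_nonneg_right (min_le_left q (1 - q)) (hv false),
    mul_le_mul_of_nonneg_right (min_le_right q (1 - q)) (hv true),
    congrArg (min q (1 - q) * ·) hv1]

lemma exists_errorProb_const_eq_min (q : ℝ) :
    ∃ v : Bool → ℝ, (∀ z, 0 ≤ v z) ∧ ∑ z, v z = 1 ∧ errorProb q (fun _ => v) = min q (1 - q) := by
  rcases le_total q (1 - q) with h | h
  · exact ⟨bern 0, by simp [bern], by simp [bern], by simp [errorProb, bern, min_eq_left h]⟩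
  · exact ⟨bern 1, by simp [bern], by simp [bern], by simp [errorProb, bern, min_eq_right h]⟩

lemma isLeast_rates {p q D : ℝ} (hp0 : 0 ≤ p) (hp1 : p < 1) (hq0 : 0 < q) (hq1 : q < 1)
    (hDlo : p * min q (1 - q) ≤ D) (hDhi : D ≤ min q (1 - q)) :
    IsLeast {r : ℝ | ∃ P : Bool → Bool → Bool → ℝ,
        (∀ x t z, 0 ≤ P x t z) ∧ (∀ x t, ∑ z, P x t z = 1) ∧
        p * errorProb q (fun _ => P false false) + (1 - p) * errorProb q (P true) ≤ D ∧
        r = (1 - p) * mutualInfo (bern q) (P true)}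
      ((1 - p) * (binEnt q - binEnt ((D - p * min q (1 - q)) / (1 - p)))) := by
  have h1p : 0 < 1 - p := by linarith
  set D' := (D - p * min q (1 - q)) / (1 - p)
  have hD'0 : 0 ≤ D' := div_nonneg (by linarith) h1p.le
  have hD'q : D' ≤ q ∧ D' ≤ 1 - q := by
    rw [← le_min_iff, div_le_iff₀ h1p]
    linarith
  constructor
  · obtain ⟨W, hW0, hW1, hWerr, hWMI⟩ :=
      exists_mutualInfo_eq_binEnt_sub_binEnt hq0 hq1 hD'0 hD'q.1 hD'q.2
    obtain ⟨v, hv0, hv1, hverr⟩ := exists_errorProb_const_eq_min q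
    refine ⟨fun x => if x then W else fun _ => v, fun x t z => ?_, fun x t => ?_, ?_, ?_⟩
    · cases x
      exacts [hv0 z, hW0 t z]
    · cases x
      exacts [hv1, hW1 t]
    · simp only [↓reduceIte, Bool.false_eq_true, hverr, hWerr, D']
      field_simp
      linarith
    · simp [hWMI]
  · rintro r ⟨P, hP0, hP1, hPD, rfl⟩
    have hmin := min_le_errorProb_const (q := q) (hP0 false false) (hP1 false false)
    have herr : errorProb q (P true) ≤ D' := by
      rw [le_div_iff₀ h1p]
      nlinarith
    exact mul_le_mul_of_nonneg_left (binEnt_sub_binEnt_le_mutualInfo hq0.le hq1.le (hP0 true)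
      (hP1 true) herr (by linarith)) h1p.le

/-- for the binary multiplicative channel `T = S·X`, `S ~ Bernoulli(q)`,
`P_X(0) = p`, Hamming distortion: the rate-distortion function of the estimator,
`R(D) = inf { I(T;Z|X) : P_{Z|XT} with E[d(S,Z)] ≤ D }`, equals
`(1−p)( H_b(q) − H_b((D − p·min{q,1−q})/(1−p)) )` for
`p·min{q,1−q} < D ≤ min{q,1−q}`. -/
theorem stmt10 (p q D : ℝ) (hp0 : 0 ≤ p) (hp1 : p < 1) (hq0 : 0 < q) (hq1 : q < 1)
    (hDlo : p * min q (1 - q) < D) (hDhi : D ≤ min q (1 - q)) :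
    let pX : Bool → ℝ := fun x => if x then 1 - p else p
    let pS : Bool → ℝ := fun s => if s then q else 1 - q
    -- channel T = S·X , so P_{T|X}(t|x) = ∑_s P_S(s) 1{t = s·x}
    let pTX : Bool → Bool → ℝ := fun x t => ∑ s, pS s * (if t = (s && x) then 1 else 0)
    -- conditional mutual information I(T;Z|X) for an estimator P_{Z|XT}
    let condMI : (Bool → Bool → Bool → ℝ) → ℝ := fun P =>
      ∑ x, ∑ t, ∑ z, pX x * pTX x t * P x t z *
        Real.log (P x t z / ∑ t', pTX x t' * P x t' z)
    -- expected Hamming distortion E[d(S,Z)] under P_S P_X P_{T|XS} P_{Z|XT}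
    let expDist : (Bool → Bool → Bool → ℝ) → ℝ := fun P =>
      ∑ x, ∑ s, ∑ z, pX x * pS s * P x (s && x) z * (if s = z then 0 else 1)
    sInf { r : ℝ | ∃ P : Bool → Bool → Bool → ℝ,
        (∀ x t z, 0 ≤ P x t z) ∧ (∀ x t, ∑ z, P x t z = 1) ∧
        expDist P ≤ D ∧ r = condMI P } =
      (1 - p) * (binEnt q - binEnt ((D - p * min q (1 - q)) / (1 - p))) := by
  intro pX pS pTX condMI expDist
  have hpTX : pTX = fun x => if x then bern q else fun t => if t = false then 1 else 0 := by
    funext x t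
    cases x <;> cases t <;> simp [pTX, pS, bern]
  have hMI : ∀ P, condMI P = (1 - p) * mutualInfo (bern q) (P true) := by
    intro P
    have : condMI P = ∑ x, pX x * mutualInfo (pTX x) (P x) := by
      simp only [condMI, mutualInfo, mul_sum, mul_assoc]
    simp [this, hpTX, pX, mutualInfo_ite_eq_zero]
  have hDist : ∀ P, expDist P =
      p * errorProb q (fun _ => P false false) + (1 - p) * errorProb q (P true) := by
    intro P
    simp only [expDist, errorProb, pX, pS, bern, Fintype.sum_bool, Bool.and_true, Bool.and_false,
      ↓reduceIte, Bool.true_eq_false, Bool.false_eq_true]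
    ring
  simp only [hMI, hDist]
  exact (isLeast_rates hp0 hp1 hq0 hq1 hDlo.le hDhi).csInf_eq
end

section
/- Excess-distortion random-coding bound: with X^n drawn i.i.d. from P_X, codewords Z_1^n, …, Z_K^n drawn conditionally i.i.d. from P_{Z|X}^n given X^n (independent of T^n), and the minimum-excess-probability estimator, there exists a codebook such that the excess-distortion probability satisfies ε ≤ P[d(S^n, Z^n) > d] + P[ i(T^n; Z^n | X^n) > log K − γ ] + exp(−exp(γ)), where Z^n on the right-hand side is a single codeword drawn from P_{Z|XT}^n given (X^n, T^n) and i is the conditional information density. -/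
/-!
Fix `X^n = x`. Conditionally on `T^n = t`, the estimator with codebook `c` has excess
probability `min_k π(t, c_k, x)`. Writing a number in `[0, 1]` as `∫₀¹ 1{y ≤ ·} dy`, the
expected minimum over an i.i.d. `P_{Z|X}` codebook becomes `∫₀¹ P_{Z|X}[π ≥ y]^K dy`. Off
the atypical set `{i > log K - γ}` one has `e^γ P_{Z|XT} ≤ K P_{Z|X}`, so `(1 - u)^K ≤ e^{-Ku}`
and the convexity of `exp` give the covering bound
`P_{Z|X}[π ≥ y]^K ≤ P_{Z|XT}[π ≥ y] + P[i > log K - γ] + exp(-e^γ)`, and integrating over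
`y` turns `P_{Z|XT}[π ≥ ·]` back into `E[π(T, Z, X)] = P[d(S^n, Z^n) > d]`. Some codebook
does at least as well as the average over codebooks.
-/

open Finset MeasureTheory

section

open Real

lemma exp_neg_mul_le_one_sub_add_exp_neg {a v : ℝ} (hv0 : 0 ≤ v) (hv1 : v ≤ 1) :
    exp (-(a * v)) ≤ 1 - v + exp (-a) := by
  have h := convexOn_exp.2 (Set.mem_univ 0) (Set.mem_univ (-a)) (sub_nonneg.2 hv1) hv0
    (sub_add_cancel 1 v)
  simp only [smul_eq_mul, mul_zero, zero_add, exp_zero, mul_one, mul_neg] at h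
  rw [mul_comm]
  nlinarith [exp_pos (-a)]

theorem pow_sum_le_of_exp_mul_le {B : Type*} [Fintype B] (K : ℕ) (γ : ℝ) (q P : B → ℝ)
    (A E : Finset B) (hq0 : ∀ b, 0 ≤ q b) (hq1 : ∑ b, q b = 1) (hP0 : ∀ b, 0 ≤ P b)
    (hP1 : ∑ b, P b = 1) (hcm : ∀ b ∉ E, exp γ * P b ≤ K * q b) :
    (∑ b ∈ A, q b) ^ K ≤ ∑ b ∈ A, P b + ∑ b ∈ E, P b + exp (-exp γ) := by
  classical
  set F := ∑ b ∈ Aᶜ, q b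
  set v := ∑ b ∈ Aᶜ with b ∉ E, P b
  have hqA : ∑ b ∈ A, q b = 1 - F := by rw [← hq1, ← sum_add_sum_compl A]; ring
  have hPA : 1 ≤ ∑ b ∈ A, P b + ∑ b ∈ E, P b + v := by
    have hPE : ∑ b ∈ Aᶜ with b ∈ E, P b ≤ ∑ b ∈ E, P b :=
      sum_le_sum_of_subset_of_nonneg (fun b hb => (mem_filter.1 hb).2) fun b _ _ => hP0 b
    rw [← hP1, ← sum_add_sum_compl A, ← sum_filter_add_sum_filter_not Aᶜ (· ∈ E)]
    linarith
  have hv0 : 0 ≤ v := sum_nonneg fun b _ => hP0 b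
  have hv1 : v ≤ 1 := by
    rw [← hP1]; exact sum_le_sum_of_subset_of_nonneg (subset_univ _) fun b _ _ => hP0 b
  have hFv : exp γ * v ≤ K * F := calc
    exp γ * v ≤ ∑ b ∈ Aᶜ with b ∉ E, (K * q b) := by
      rw [mul_sum]; exact sum_le_sum fun b hb => hcm b (mem_filter.1 hb).2
    _ ≤ K * F := by
      rw [← mul_sum]
      gcongr
      exact sum_le_sum_of_subset_of_nonneg (filter_subset _ _) fun b _ _ => hq0 b
  calc (∑ b ∈ A, q b) ^ K = (1 - F) ^ K := by rw [hqA]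
    _ ≤ exp (-F) ^ K := by
      gcongr
      · exact hqA ▸ sum_nonneg fun b _ => hq0 b
      · linarith [add_one_le_exp (-F)]
    _ = exp (-(K * F)) := by rw [← exp_nat_mul]; ring_nf
    _ ≤ exp (-(exp γ * v)) := by gcongr
    _ ≤ 1 - v + exp (-exp γ) := exp_neg_mul_le_one_sub_add_exp_neg hv0 hv1
    _ ≤ _ := by linarith

section LayerCake

variable {ι : Type*} [Fintype ι] (w f : ι → ℝ)

lemma sum_filter_le_eq_sum_indicator (y : ℝ) :
    ∑ i with y ≤ f i, w i = ∑ i, {x | x ≤ f i}.indicator (fun _ => w i) y := by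
  simp [sum_filter, Set.indicator_apply]

lemma intervalIntegrable_indicator_le_const (a c : ℝ) :
    IntervalIntegrable ({x | x ≤ a}.indicator fun _ => c) volume 0 1 :=
  intervalIntegrable_iff.2 <|
    (intervalIntegrable_iff.1 intervalIntegrable_const).indicator measurableSet_Iic

lemma intervalIntegrable_sum_filter_le :
    IntervalIntegrable (fun y => ∑ i with y ≤ f i, w i) volume 0 1 := by
  have h := IntervalIntegrable.sum univ fun i _ =>
    intervalIntegrable_indicator_le_const (f i) (w i)
  simpa only [sum_filter_le_eq_sum_indicator, ← Finset.sum_apply] using h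

lemma integral_sum_filter_le (hf0 : ∀ i, 0 ≤ f i) (hf1 : ∀ i, f i ≤ 1) :
    ∫ y in (0:ℝ)..1, ∑ i with y ≤ f i, w i = ∑ i, w i * f i := by
  simp only [sum_filter_le_eq_sum_indicator]
  rw [intervalIntegral.integral_finsetSum fun i _ => intervalIntegrable_indicator_le_const _ _]
  refine sum_congr rfl fun i _ => ?_
  rw [intervalIntegral.integral_indicator ⟨hf0 i, hf1 i⟩]
  simp [mul_comm]

end LayerCake

theorem sum_prod_mul_inf'_le_of_exp_mul_le {B : Type*} [Fintype B] (K : ℕ) [NeZero K]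
    (γ : ℝ) (q P f : B → ℝ) (E : Finset B) (hq0 : ∀ b, 0 ≤ q b) (hq1 : ∑ b, q b = 1)
    (hP0 : ∀ b, 0 ≤ P b) (hP1 : ∑ b, P b = 1) (hf0 : ∀ b, 0 ≤ f b) (hf1 : ∀ b, f b ≤ 1)
    (hcm : ∀ b ∉ E, exp γ * P b ≤ K * q b) :
    ∑ c : Fin K → B, (∏ k, q (c k)) * univ.inf' univ_nonempty (fun k => f (c k)) ≤
      ∑ b, P b * f b + ∑ b ∈ E, P b + exp (-exp γ) := by
  have hlayer : ∀ y : ℝ,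
      ∑ c : Fin K → B with y ≤ univ.inf' univ_nonempty (fun k => f (c k)), ∏ k, q (c k) =
        (∑ b with y ≤ f b, q b) ^ K := by
    intro y
    rw [sum_pow']
    congr 1
    ext c
    simp [le_inf'_iff, Fintype.mem_piFinset]
  have hmin0 : ∀ c : Fin K → B, 0 ≤ univ.inf' univ_nonempty (fun k => f (c k)) :=
    fun c => le_inf' _ _ fun k _ => hf0 (c k)
  have hmin1 : ∀ c : Fin K → B, univ.inf' univ_nonempty (fun k => f (c k)) ≤ 1 :=
    fun c => (inf'_le _ (mem_univ 0)).trans (hf1 _)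
  calc _ = ∫ y in (0:ℝ)..1, (∑ b with y ≤ f b, q b) ^ K := by
        simp_rw [← hlayer]; exact (integral_sum_filter_le _ _ hmin0 hmin1).symm
    _ ≤ ∫ y in (0:ℝ)..1, (∑ b with y ≤ f b, P b + (∑ b ∈ E, P b + exp (-exp γ))) := by
        refine intervalIntegral.integral_mono_on zero_le_one ?_ ?_ fun y _ => ?_
        · simp_rw [← hlayer]; exact intervalIntegrable_sum_filter_le _ _
        · exact (intervalIntegrable_sum_filter_le _ _).add intervalIntegrable_const
        · rw [← add_assoc]; exact pow_sum_le_of_exp_mul_le K γ q P _ E hq0 hq1 hP0 hP1 hcm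
    _ = _ := by
        rw [intervalIntegral.integral_add (intervalIntegrable_sum_filter_le _ _)
          intervalIntegrable_const, integral_sum_filter_le _ _ hf0 hf1]
        simp [add_assoc]

-- The paper's `π(t, z, x)`, with `j` the unnormalised conditional law of `S^n` given `(x, t)`.
noncomputable def condProb {SS B : Type*} [Fintype SS] (j : SS → ℝ) (D : SS → B → Prop)
    [∀ s b, Decidable (D s b)] (b : B) : ℝ :=
  (∑ s, if D s b then j s else 0) / ∑ s, j s

lemma condProb_nonneg {SS B : Type*} [Fintype SS] {j : SS → ℝ} (hj : ∀ s, 0 ≤ j s)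
    (D : SS → B → Prop) [∀ s b, Decidable (D s b)] (b : B) : 0 ≤ condProb j D b :=
  div_nonneg (sum_nonneg fun s _ => by split_ifs <;> simp [hj s]) (sum_nonneg fun s _ => hj s)

lemma condProb_le_one {SS B : Type*} [Fintype SS] {j : SS → ℝ} (hj : ∀ s, 0 ≤ j s)
    (D : SS → B → Prop) [∀ s b, Decidable (D s b)] (b : B) : condProb j D b ≤ 1 :=
  div_le_one_of_le₀ (sum_le_sum fun s _ => by split_ifs <;> simp [hj s])
    (sum_nonneg fun s _ => hj s)

theorem sum_prod_mul_condProb_inf'_le {SS B : Type*} [Fintype SS] [Fintype B] (K : ℕ)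
    [NeZero K] (γ : ℝ) (j : SS → ℝ) (q P : B → ℝ) (D : SS → B → Prop) [∀ s b, Decidable (D s b)]
    (E : B → Prop) [DecidablePred E] (hj : ∀ s, 0 ≤ j s) (hq0 : ∀ b, 0 ≤ q b)
    (hq1 : ∑ b, q b = 1) (hP0 : ∀ b, 0 ≤ P b) (hP1 : ∑ b, P b = 1)
    (hcm : 0 < ∑ s, j s → ∀ b, ¬ E b → exp γ * P b ≤ K * q b) :
    ∑ c : Fin K → B, (∏ k, q (c k)) * ((∑ s, j s) * univ.inf' univ_nonempty
        (fun k => condProb j D (c k))) ≤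
      ∑ s, ∑ b, j s * P b * (if D s b then 1 else 0) +
        ∑ s, ∑ b, j s * P b * (if E b then 1 else 0) + (∑ s, j s) * exp (-exp γ) := by
  rcases (sum_nonneg fun s (_ : s ∈ univ) => hj s).eq_or_lt with hp | hp
  · have hj0 : ∀ s, j s = 0 := fun s =>
      (sum_eq_zero_iff_of_nonneg fun s _ => hj s).1 hp.symm s (mem_univ s)
    simp [hj0]
  have hD : (∑ s, j s) * ∑ b, P b * condProb j D b =
      ∑ s, ∑ b, j s * P b * (if D s b then 1 else 0) := by
    calc _ = ∑ b, ∑ s, P b * (if D s b then j s else 0) := by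
          rw [mul_sum]
          refine sum_congr rfl fun b _ => ?_
          rw [← mul_sum, condProb]
          field_simp
      _ = _ := by
          rw [sum_comm]
          refine sum_congr rfl fun s _ => sum_congr rfl fun b _ => ?_
          split_ifs <;> ring
  have hE : (∑ s, j s) * ∑ b with E b, P b =
      ∑ s, ∑ b, j s * P b * (if E b then 1 else 0) := by
    rw [sum_filter, sum_mul]
    refine sum_congr rfl fun s _ => ?_
    rw [mul_sum]
    refine sum_congr rfl fun b _ => ?_
    split_ifs <;> ring
  calc _ = (∑ s, j s) * ∑ c : Fin K → B, (∏ k, q (c k)) *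
        univ.inf' univ_nonempty (fun k => condProb j D (c k)) := by
        rw [mul_sum]; exact sum_congr rfl fun c _ => by ring
    _ ≤ (∑ s, j s) * (∑ b, P b * condProb j D b + ∑ b with E b, P b + exp (-exp γ)) :=
        mul_le_mul_of_nonneg_left (sum_prod_mul_inf'_le_of_exp_mul_le K γ q P _ {b | E b}
          hq0 hq1 hP0 hP1 (condProb_nonneg hj D) (condProb_le_one hj D)
          (fun b hb => hcm hp b (by simpa using hb))) hp.le
    _ = _ := by rw [mul_add, mul_add, hD, hE]

lemma exists_le_sum_mul_of_sum_eq_one {A : Type*} [Fintype A] (W F : A → ℝ)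
    (hW0 : ∀ a, 0 ≤ W a) (hW1 : ∑ a, W a = 1) : ∃ a, F a ≤ ∑ a, W a * F a := by
  obtain ⟨a, -, ha⟩ := exists_min_image univ F (nonempty_of_sum_ne_zero (hW1 ▸ one_ne_zero))
  refine ⟨a, ?_⟩
  calc F a = ∑ c, W c * F a := by rw [← sum_mul, hW1, one_mul]
    _ ≤ ∑ c, W c * F c :=
      sum_le_sum fun c _ => mul_le_mul_of_nonneg_left (ha c (mem_univ c)) (hW0 c)

theorem exists_codebook_le {SS TT B : Type*} [Fintype SS] [Fintype TT] [Fintype B] (K : ℕ)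
    [NeZero K] (γ : ℝ) (j : SS → TT → ℝ) (q : B → ℝ) (P : TT → B → ℝ)
    (D : SS → B → Prop) [∀ s b, Decidable (D s b)] (E : TT → B → Prop)
    [∀ t b, Decidable (E t b)] (hj : ∀ s t, 0 ≤ j s t) (hq0 : ∀ b, 0 ≤ q b)
    (hq1 : ∑ b, q b = 1) (hP0 : ∀ t b, 0 ≤ P t b) (hP1 : ∀ t, ∑ b, P t b = 1)
    (hcm : ∀ t, 0 < ∑ s, j s t → ∀ b, ¬ E t b → exp γ * P t b ≤ K * q b) :
    ∃ c : Fin K → B, ∑ t, (∑ s, j s t) * univ.inf' univ_nonempty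
        (fun k => condProb (j · t) D (c k)) ≤
      ∑ s, ∑ t, ∑ b, j s t * P t b * (if D s b then 1 else 0) +
        ∑ s, ∑ t, ∑ b, j s t * P t b * (if E t b then 1 else 0) +
        (∑ s, ∑ t, j s t) * exp (-exp γ) := by
  obtain ⟨c, hc⟩ := exists_le_sum_mul_of_sum_eq_one (fun c : Fin K → B => ∏ k, q (c k))
    (fun c => ∑ t, (∑ s, j s t) * univ.inf' univ_nonempty (fun k => condProb (j · t) D (c k)))
    (fun c => prod_nonneg fun k _ => hq0 (c k)) (by rw [← Fintype.sum_pow, hq1, one_pow])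
  refine ⟨c, hc.trans ?_⟩
  simp_rw [mul_sum]
  rw [sum_comm]
  refine (sum_le_sum fun t _ => sum_prod_mul_condProb_inf'_le K γ (j · t) q (P t) D (E t)
    (hj · t) hq0 hq1 (hP0 t) (hP1 t) (hcm t)).trans_eq ?_
  rw [sum_add_distrib, sum_add_distrib, sum_comm, sum_comm (γ := TT), ← sum_mul,
    sum_comm (γ := TT)]

lemma exp_mul_prod_le_mul_prod_of_sum_log_div_le {ι : Type*} [Fintype ι] {a b : ι → ℝ}
    {γ c : ℝ} (ha : ∀ i, 0 ≤ a i) (hb : ∀ i, 0 ≤ b i) (hab : ∀ i, 0 < a i → 0 < b i)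
    (hc : 0 < c) (h : ∑ i, log (a i / b i) ≤ log c - γ) :
    exp γ * ∏ i, a i ≤ c * ∏ i, b i := by
  by_cases hpos : ∀ i, 0 < a i
  · have hprod : ∏ i, a i = exp (∑ i, log (a i / b i)) * ∏ i, b i := by
      rw [exp_sum, ← prod_mul_distrib]
      refine prod_congr rfl fun i _ => ?_
      rw [exp_log (div_pos (hpos i) (hab i (hpos i))), div_mul_cancel₀ _ (hab i (hpos i)).ne']
    calc exp γ * ∏ i, a i = exp (γ + ∑ i, log (a i / b i)) * ∏ i, b i := by
          rw [hprod, exp_add, mul_assoc]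
      _ ≤ exp (log c) * ∏ i, b i := by
          gcongr
          · exact prod_nonneg fun i _ => hb i
          · linarith
      _ = c * ∏ i, b i := by rw [exp_log hc]
  · obtain ⟨i, hi⟩ := not_forall.1 hpos
    rw [prod_eq_zero (mem_univ i) (le_antisymm (not_lt.1 hi) (ha i)), mul_zero]
    exact mul_nonneg hc.le (prod_nonneg fun i _ => hb i)

end

section Memoryless

variable {ι α : Type*} [Fintype ι] [DecidableEq ι] [Fintype α]

lemma sum_prod_eq_one (g : ι → α → ℝ) (hg : ∀ i, ∑ a, g i a = 1) :
    ∑ x : ι → α, ∏ i, g i (x i) = 1 := by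
  rw [← Fintype.prod_sum]; exact prod_eq_one fun i _ => hg i

lemma sum_pos_of_sum_prod_pos (g : ι → α → ℝ) (hg : ∀ i a, 0 ≤ g i a)
    (h : 0 < ∑ x : ι → α, ∏ i, g i (x i)) (i : ι) : 0 < ∑ a, g i a := by
  rw [← Fintype.prod_sum] at h
  exact (sum_nonneg fun a _ => hg i a).lt_of_ne fun h0 =>
    h.ne' (prod_eq_zero (mem_univ i) h0.symm)

lemma sum_sum_sum_prod_eq_pow {β γ : Type*} [Fintype β] [Fintype γ] (w : α → β → γ → ℝ) :
    ∑ x : ι → α, ∑ y : ι → β, ∑ z : ι → γ, ∏ i, w (x i) (y i) (z i) =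
      (∑ a, ∑ b, ∑ c, w a b c) ^ Fintype.card ι := by
  rw [← card_univ, ← prod_const]
  simp only [Fintype.prod_sum]

end Memoryless

section Mixture

variable {α β : Type*} [Fintype α] {p : α → ℝ} {W : α → β → ℝ}

noncomputable def mixture (p : α → ℝ) (W : α → β → ℝ) (b : β) : ℝ := ∑ a, p a * W a b

lemma mixture_nonneg (hp : ∀ a, 0 ≤ p a) (hW : ∀ a b, 0 ≤ W a b) (b : β) :
    0 ≤ mixture p W b :=
  sum_nonneg fun a _ => mul_nonneg (hp a) (hW a b)

lemma mixture_pos (hp : ∀ a, 0 ≤ p a) (hW : ∀ a b, 0 ≤ W a b) {a : α} {b : β}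
    (ha : 0 < p a) (hab : 0 < W a b) : 0 < mixture p W b :=
  (mul_pos ha hab).trans_le <| single_le_sum (f := fun a => p a * W a b)
    (fun a _ => mul_nonneg (hp a) (hW a b)) (mem_univ a)

lemma sum_mixture [Fintype β] (hp : ∑ a, p a = 1) (hW : ∀ a, ∑ b, W a b = 1) :
    ∑ b, mixture p W b = 1 := by
  unfold mixture
  rw [sum_comm]
  simp [← mul_sum, hW, hp]

end Mixture

lemma mixture_pos_of_sum_prod_pos {ι X S T : Type*} [Fintype ι] [DecidableEq ι] [Fintype S]
    {pX : X → ℝ} {pS : S → ℝ} {PT : X → S → T → ℝ} (hpX : ∀ x, 0 ≤ pX x)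
    (hpS : ∀ s, 0 ≤ pS s) (hPT : ∀ x s t, 0 ≤ PT x s t) {xs : ι → X} {ts : ι → T}
    (h : 0 < ∑ ss : ι → S, ∏ i, pX (xs i) * pS (ss i) * PT (xs i) (ss i) (ts i)) (i : ι) :
    0 < mixture pS (PT (xs i)) (ts i) := by
  have hi := sum_pos_of_sum_prod_pos (fun i s => pX (xs i) * pS s * PT (xs i) s (ts i))
    (fun i s => mul_nonneg (mul_nonneg (hpX _) (hpS _)) (hPT _ _ _)) h i
  simp_rw [mul_assoc, ← mul_sum] at hi
  exact pos_of_mul_pos_right hi (hpX _)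

theorem stmt16_general {X S T Z : Type} [Fintype X] [Fintype S] [Fintype T] [Fintype Z]
    (n K : ℕ) [NeZero K]
    (pX : X → ℝ) (pS : S → ℝ) (PT : X → S → T → ℝ) (PZ : X → T → Z → ℝ)
    (d : S → Z → ℝ) (dthr γ : ℝ)
    (hpX : ∀ x, 0 ≤ pX x) (hpXsum : ∑ x, pX x = 1)
    (hpS : ∀ s, 0 ≤ pS s) (hpSsum : ∑ s, pS s = 1)
    (hPT : ∀ x s t, 0 ≤ PT x s t) (hPTsum : ∀ x s, ∑ t, PT x s t = 1)
    (hPZ : ∀ x t z, 0 ≤ PZ x t z) (hPZsum : ∀ x t, ∑ z, PZ x t z = 1) :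
    -- memoryless joint law of (X^n, S^n, T^n)
    let jointn : (Fin n → X) → (Fin n → S) → (Fin n → T) → ℝ := fun xs ss ts =>
      ∏ i, pX (xs i) * pS (ss i) * PT (xs i) (ss i) (ts i)
    -- per-block (average) distortion
    let dn : (Fin n → S) → (Fin n → Z) → ℝ := fun ss zs => (∑ i, d (ss i) (zs i)) / n
    -- marginal of (X^n, T^n)
    let pXTn : (Fin n → X) → (Fin n → T) → ℝ := fun xs ts => ∑ ss, jointn xs ss ts
    -- π(t^n, z^n, x^n) = P[d(S^n,z^n) > d | X^n = x^n, T^n = t^n]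
    let π : (Fin n → T) → (Fin n → Z) → (Fin n → X) → ℝ := fun ts zs xs =>
      (∑ ss, if dn ss zs > dthr then jointn xs ss ts else 0) / pXTn xs ts
    -- marginal channel P_{T|X} and induced marginal P_{Z|X}
    let pTX : X → T → ℝ := fun x t => ∑ s, pS s * PT x s t
    let pZX : X → Z → ℝ := fun x z => ∑ t, pTX x t * PZ x t z
    -- conditional information density i(t^n; z^n | x^n)
    let iDen : (Fin n → X) → (Fin n → T) → (Fin n → Z) → ℝ := fun xs ts zs =>
      ∑ i, Real.log (PZ (xs i) (ts i) (zs i) / pZX (xs i) (zs i))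
    ∃ C : (Fin n → X) → Fin K → (Fin n → Z),
      -- excess-distortion probability of the minimum-excess-probability estimator
      (∑ xs, ∑ ts, pXTn xs ts *
          Finset.univ.inf' Finset.univ_nonempty (fun k => π ts (C xs k) xs)) ≤
        -- P[d(S^n, Z^n) > d] with Z^n ~ P_{Z|XT}^n
        (∑ xs, ∑ ss, ∑ ts, ∑ zs : Fin n → Z,
          jointn xs ss ts * (∏ i, PZ (xs i) (ts i) (zs i)) *
            (if dn ss zs > dthr then 1 else 0)) +
        -- P[i(T^n;Z^n|X^n) > log K − γ]
        (∑ xs, ∑ ss, ∑ ts, ∑ zs : Fin n → Z,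
          jointn xs ss ts * (∏ i, PZ (xs i) (ts i) (zs i)) *
            (if iDen xs ts zs > Real.log K - γ then 1 else 0)) +
        Real.exp (-Real.exp γ) := by
  intro jointn dn pXTn π pTX pZX iDen
  have hpTX0 : ∀ x t, 0 ≤ pTX x t := fun x t => mixture_nonneg hpS (hPT x) t
  have hpZX0 : ∀ x z, 0 ≤ pZX x z := fun x z => mixture_nonneg (hpTX0 x) (hPZ x) z
  have hjoint : ∀ xs ss ts, 0 ≤ jointn xs ss ts := fun xs ss ts =>
    prod_nonneg fun i _ => mul_nonneg (mul_nonneg (hpX _) (hpS _)) (hPT _ _ _)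
  have hq1 : ∀ xs : Fin n → X, ∑ zs : Fin n → Z, ∏ i, pZX (xs i) (zs i) = 1 := fun xs =>
    sum_prod_eq_one (fun i => pZX (xs i)) fun i =>
      sum_mixture (sum_mixture hpSsum (hPTsum _)) (hPZsum _)
  have hP1 : ∀ (xs : Fin n → X) (ts : Fin n → T),
      ∑ zs : Fin n → Z, ∏ i, PZ (xs i) (ts i) (zs i) = 1 := fun xs ts =>
    sum_prod_eq_one (fun i => PZ (xs i) (ts i)) fun i => hPZsum _ _
  have hcm : ∀ xs ts, 0 < pXTn xs ts → ∀ zs, ¬ iDen xs ts zs > Real.log K - γ →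
      Real.exp γ * ∏ i, PZ (xs i) (ts i) (zs i) ≤ K * ∏ i, pZX (xs i) (zs i) :=
    fun xs ts hp zs hi => exp_mul_prod_le_mul_prod_of_sum_log_div_le (fun i => hPZ _ _ _)
      (fun i => hpZX0 _ _)
      (fun i => mixture_pos (hpTX0 _) (hPZ _) (mixture_pos_of_sum_prod_pos hpX hpS hPT hp i))
      (by simp [Nat.pos_of_neZero]) (not_lt.1 hi)
  choose C hC using fun xs => exists_codebook_le (B := Fin n → Z) K γ (jointn xs)
    (fun zs => ∏ i, pZX (xs i) (zs i)) (fun ts zs => ∏ i, PZ (xs i) (ts i) (zs i))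
    (fun ss zs => dn ss zs > dthr) (fun ts zs => iDen xs ts zs > Real.log K - γ) (hjoint xs)
    (fun zs => prod_nonneg fun i _ => hpZX0 _ _) (hq1 xs)
    (fun ts zs => prod_nonneg fun i _ => hPZ _ _ _) (hP1 xs) (hcm xs)
  have htotal : ∑ xs, ∑ ss, ∑ ts, jointn xs ss ts = 1 := by
    rw [sum_sum_sum_prod_eq_pow (fun x s t => pX x * pS s * PT x s t)]
    simp [← mul_sum, hPTsum, hpSsum, hpXsum]
  refine ⟨C, (sum_le_sum fun xs _ => hC xs).trans_eq ?_⟩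
  rw [sum_add_distrib, sum_add_distrib, ← sum_mul, htotal, one_mul]

/-- excess-distortion random-coding bound. With `X^n` i.i.d. from `P_X`,
`K` codewords drawn conditionally i.i.d. from `P_{Z|X}^n` given `X^n` (independent of
`T^n`), and the minimum-excess-probability estimator, there exists a (realized) codebook
`C` such that the excess-distortion probability satisfies
`ε ≤ P[d(S^n,Z^n) > d] + P[i(T^n;Z^n|X^n) > log K − γ] + exp(−exp γ)`, where on the
right-hand side `Z^n ~ P_{Z|XT}^n` given `(X^n,T^n)` and `i` is the conditional
information density. -/
theorem stmt16 {X S T Z : Type} [Fintype X] [Fintype S] [Fintype T] [Fintype Z]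
    (n K : ℕ) (hn : 0 < n) [NeZero K]
    (pX : X → ℝ) (pS : S → ℝ) (PT : X → S → T → ℝ) (PZ : X → T → Z → ℝ)
    (d : S → Z → ℝ) (dthr γ : ℝ)
    (hpX : ∀ x, 0 ≤ pX x) (hpXsum : ∑ x, pX x = 1)
    (hpS : ∀ s, 0 ≤ pS s) (hpSsum : ∑ s, pS s = 1)
    (hPT : ∀ x s t, 0 ≤ PT x s t) (hPTsum : ∀ x s, ∑ t, PT x s t = 1)
    (hPZ : ∀ x t z, 0 ≤ PZ x t z) (hPZsum : ∀ x t, ∑ z, PZ x t z = 1)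
    (hd : ∀ s z, 0 ≤ d s z) :
    -- memoryless joint law of (X^n, S^n, T^n)
    let jointn : (Fin n → X) → (Fin n → S) → (Fin n → T) → ℝ := fun xs ss ts =>
      ∏ i, pX (xs i) * pS (ss i) * PT (xs i) (ss i) (ts i)
    -- per-block (average) distortion
    let dn : (Fin n → S) → (Fin n → Z) → ℝ := fun ss zs => (∑ i, d (ss i) (zs i)) / n
    -- marginal of (X^n, T^n)
    let pXTn : (Fin n → X) → (Fin n → T) → ℝ := fun xs ts => ∑ ss, jointn xs ss ts
    -- π(t^n, z^n, x^n) = P[d(S^n,z^n) > d | X^n = x^n, T^n = t^n]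
    let π : (Fin n → T) → (Fin n → Z) → (Fin n → X) → ℝ := fun ts zs xs =>
      (∑ ss, if dn ss zs > dthr then jointn xs ss ts else 0) / pXTn xs ts
    -- marginal channel P_{T|X} and induced marginal P_{Z|X}
    let pTX : X → T → ℝ := fun x t => ∑ s, pS s * PT x s t
    let pZX : X → Z → ℝ := fun x z => ∑ t, pTX x t * PZ x t z
    -- conditional information density i(t^n; z^n | x^n)
    let iDen : (Fin n → X) → (Fin n → T) → (Fin n → Z) → ℝ := fun xs ts zs =>
      ∑ i, Real.log (PZ (xs i) (ts i) (zs i) / pZX (xs i) (zs i))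
    ∃ C : (Fin n → X) → Fin K → (Fin n → Z),
      -- excess-distortion probability of the minimum-excess-probability estimator
      (∑ xs, ∑ ts, pXTn xs ts *
          Finset.univ.inf' Finset.univ_nonempty (fun k => π ts (C xs k) xs)) ≤
        -- P[d(S^n, Z^n) > d] with Z^n ~ P_{Z|XT}^n
        (∑ xs, ∑ ss, ∑ ts, ∑ zs : Fin n → Z,
          jointn xs ss ts * (∏ i, PZ (xs i) (ts i) (zs i)) *
            (if dn ss zs > dthr then 1 else 0)) +
        -- P[i(T^n;Z^n|X^n) > log K − γ]
        (∑ xs, ∑ ss, ∑ ts, ∑ zs : Fin n → Z,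
          jointn xs ss ts * (∏ i, PZ (xs i) (ts i) (zs i)) *
            (if iDen xs ts zs > Real.log K - γ then 1 else 0)) +
        Real.exp (-Real.exp γ) :=
  stmt16_general n K pX pS PT PZ d dthr γ hpX hpXsum hpS hpSsum hPT hPTsum hPZ hPZsum
end

section
/- Backward-channel expectation identity used in the converse: for W uniformizable over [K] with encoder P_{W|XT}(w|x,t) ≤ 1 and decoder P_{Z|W}, and j(t|z,x) = log(dP_{T|ZX}(t|z,x)/dP_{T|X}(t|x)), one has E[exp(j(T|Z,X))] ≤ K, where the expectation is over the joint law of (X,T,W,Z). -/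
open Finset

/-!
Where the joint law is positive, `P_{W|XT} ≤ 1` bounds each term of `E[exp j]` by
`P_X(x) P_{Z|W}(z|w) P_{T|XZ}(t|x,z)`: the factor `P_{T|X}` of the joint law cancels
against the denominator of `exp j`. Summing `P_{T|XZ}` over `t` gives at most `1`,
`P_{Z|W}` over `z` gives `1`, and `w` ranges over `K` values.
-/

/-- The hypothesis `0 < q → 0 < r` ensures `log (r / a)` is only evaluated where
`exp ∘ log` is the identity; at `r = 0` it would give `exp (log 0) = 1`. -/
lemma mul_exp_log_div_le_of_le_mul {q a c r : ℝ} (hq : 0 ≤ q) (hqa : q ≤ a * c)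
    (hc : 0 ≤ c) (hr : 0 ≤ r) (hpos : 0 < q → 0 < r) :
    q * Real.exp (Real.log (r / a)) ≤ c * r := by
  rcases hq.eq_or_lt with rfl | hq
  · rw [zero_mul]
    exact mul_nonneg hc hr
  have ha : 0 < a := pos_of_mul_pos_left (hq.trans_le hqa) hc
  calc q * Real.exp (Real.log (r / a)) = q * (r / a) := by
        rw [Real.exp_log (div_pos (hpos hq) ha)]
    _ ≤ a * c * (r / a) := by gcongr
    _ = c * r := by field_simp

lemma sum_sum_sum_mul_le_card {W Z T : Type*} [Fintype W] [Fintype Z] [Fintype T]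
    (d : W → Z → ℝ) (r : Z → T → ℝ) (hd : ∀ w z, 0 ≤ d w z)
    (hdsum : ∀ w, ∑ z, d w z = 1) (hr : ∀ z, ∑ t, r z t ≤ 1) :
    ∑ t, ∑ w, ∑ z, d w z * r z t ≤ Fintype.card W :=
  calc ∑ t, ∑ w, ∑ z, d w z * r z t = ∑ w, ∑ z, d w z * ∑ t, r z t := by
        rw [sum_comm]
        simp only [mul_sum]
        exact sum_congr rfl fun w _ => sum_comm
    _ ≤ ∑ w, ∑ z, d w z * 1 := by
        gcongr with w _ z _
        exacts [hd w z, hr z]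
    _ = Fintype.card W := by simp [hdsum]

theorem stmt19_general {X T Z : Type} [Fintype X] [Fintype T] [Fintype Z]
    (K : ℕ)
    (pX : X → ℝ) (pTX : X → T → ℝ)
    (enc : X → T → Fin K → ℝ) (dec : Fin K → Z → ℝ)
    (hpX : ∀ x, 0 ≤ pX x) (hpXsum : ∑ x, pX x = 1)
    (hpTX : ∀ x t, 0 ≤ pTX x t)
    (henc : ∀ x t w, 0 ≤ enc x t w) (hencsum : ∀ x t, ∑ w, enc x t w = 1)
    (hdec : ∀ w z, 0 ≤ dec w z) (hdecsum : ∀ w, ∑ z, dec w z = 1) :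
    -- joint law of (X,T,W,Z)
    let joint : X → T → Fin K → Z → ℝ := fun x t w z =>
      pX x * pTX x t * enc x t w * dec w z
    -- marginal of (X,Z) and backward conditional P_{T|ZX}
    let pXZ : X → Z → ℝ := fun x z => ∑ t, ∑ w, joint x t w z
    let pTZX : X → Z → T → ℝ := fun x z t => (∑ w, joint x t w z) / pXZ x z
    -- information density j(t|z,x)
    let j : X → Z → T → ℝ := fun x z t => Real.log (pTZX x z t / pTX x t)
    (∑ x, ∑ t, ∑ w, ∑ z, joint x t w z * Real.exp (j x z t)) ≤ (K : ℝ) := by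
  intro joint pXZ pTZX j
  have hjoint x t w z : 0 ≤ joint x t w z :=
    mul_nonneg (mul_nonneg (mul_nonneg (hpX x) (hpTX x t)) (henc x t w)) (hdec w z)
  have hpTZX x z t : 0 ≤ pTZX x z t :=
    div_nonneg (sum_nonneg fun w _ => hjoint x t w z)
      (sum_nonneg fun t _ => sum_nonneg fun w _ => hjoint x t w z)
  have hpTZX_pos x t w z (h : 0 < joint x t w z) : 0 < pTZX x z t := by
    have hs : 0 < ∑ w, joint x t w z :=
      h.trans_le (single_le_sum (fun w _ => hjoint x t w z) (mem_univ w))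
    exact div_pos hs <| hs.trans_le <|
      single_le_sum (f := fun t => ∑ w, joint x t w z)
        (fun t _ => sum_nonneg fun w _ => hjoint x t w z) (mem_univ t)
  have hpTZX_sum x z : ∑ t, pTZX x z t ≤ 1 := by
    simp only [pTZX, ← sum_div]
    exact div_self_le_one _
  have hjoint_le x t w z : joint x t w z ≤ pTX x t * (pX x * dec w z) := by
    have henc_le : enc x t w ≤ 1 :=
      hencsum x t ▸ single_le_sum (fun w _ => henc x t w) (mem_univ w)
    calc joint x t w z ≤ pX x * pTX x t * 1 * dec w z := by
          show pX x * pTX x t * enc x t w * dec w z ≤ _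
          gcongr
          exacts [hdec w z, mul_nonneg (hpX x) (hpTX x t)]
      _ = pTX x t * (pX x * dec w z) := by ring
  calc ∑ x, ∑ t, ∑ w, ∑ z, joint x t w z * Real.exp (j x z t)
      ≤ ∑ x, ∑ t, ∑ w, ∑ z, pX x * dec w z * pTZX x z t := by
        gcongr ∑ x, ∑ t, ∑ w, ∑ z, ?_ with x _ t _ w _ z _
        exact mul_exp_log_div_le_of_le_mul (hjoint x t w z) (hjoint_le x t w z)
          (mul_nonneg (hpX x) (hdec w z)) (hpTZX x z t) (hpTZX_pos x t w z)
    _ = ∑ x, pX x * ∑ t, ∑ w, ∑ z, dec w z * pTZX x z t := by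
        simp only [mul_assoc, mul_sum]
    _ ≤ ∑ x, pX x * K := by
        gcongr with x _
        · exact hpX x
        · simpa using sum_sum_sum_mul_le_card dec (pTZX x) hdec hdecsum (hpTZX_sum x)
    _ = K := by rw [← sum_mul, hpXsum, one_mul]

/-- backward-channel expectation identity used in the converse. For
`W ∈ [K]` with encoder `P_{W|XT}(w|x,t) ≤ 1` and decoder `P_{Z|W}`, and
`j(t|z,x) = log(P_{T|ZX}(t|z,x)/P_{T|X}(t|x))`, one has `E[exp(j(T|Z,X))] ≤ K`, the
expectation being over the joint law of `(X,T,W,Z)`. -/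
theorem stmt19 {X T Z : Type} [Fintype X] [Fintype T] [Fintype Z]
    (K : ℕ) (hK : 0 < K)
    (pX : X → ℝ) (pTX : X → T → ℝ)
    (enc : X → T → Fin K → ℝ) (dec : Fin K → Z → ℝ)
    (hpX : ∀ x, 0 ≤ pX x) (hpXsum : ∑ x, pX x = 1)
    (hpTX : ∀ x t, 0 ≤ pTX x t) (hpTXsum : ∀ x, ∑ t, pTX x t = 1)
    (henc : ∀ x t w, 0 ≤ enc x t w) (hencsum : ∀ x t, ∑ w, enc x t w = 1)
    (hdec : ∀ w z, 0 ≤ dec w z) (hdecsum : ∀ w, ∑ z, dec w z = 1) :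
    -- joint law of (X,T,W,Z)
    let joint : X → T → Fin K → Z → ℝ := fun x t w z =>
      pX x * pTX x t * enc x t w * dec w z
    -- marginal of (X,Z) and backward conditional P_{T|ZX}
    let pXZ : X → Z → ℝ := fun x z => ∑ t, ∑ w, joint x t w z
    let pTZX : X → Z → T → ℝ := fun x z t => (∑ w, joint x t w z) / pXZ x z
    -- information density j(t|z,x)
    let j : X → Z → T → ℝ := fun x z t => Real.log (pTZX x z t / pTX x t)
    (∑ x, ∑ t, ∑ w, ∑ z, joint x t w z * Real.exp (j x z t)) ≤ (K : ℝ) :=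
  stmt19_general K pX pTX enc dec hpX hpXsum hpTX henc hencsum hdec hdecsum
end
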